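/- (Degeneracy map on quasi-modular functions, Proposition 5.7) Assume 𝔽_q(T) ⊆ F, let 𝔪 ⊆ A be a nonzero ideal with 𝔭 ∤ 𝔪, and assume E satisfies its functional equation for all γ ∈ GL₂(A). Let f : Ω → L be of the form f = Σ_{i=0}^{ℓ} f_{i,E}·E^i where each f_{i,E} is modular of weight k−2i and type m−i for Γ₀(𝔪). Then δ_𝔭f = Σ_{j=0}^{ℓ} c_j·E^j, where c_j := Σ_{s=0}^{ℓ−j} (s+j choose j)·℘^{−s−j}·(−E_𝔭)^s·δ_𝔭f_{s+j,E}, each c_j is modular of weight k−2j and type m−j for Γ₀(𝔪𝔭), and in particular δ_𝔭f is quasi-modular of weight k, type m and depth ≤ ℓ for Γ₀(𝔪𝔭). Moreover c_ℓ = ℘^{−ℓ}·δ_𝔭f_{ℓ,E}, so if f_{ℓ,E} ≠ 0 then c_ℓ ≠ 0, i.e. δ_𝔭 preserves the depth. -/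

import Mathlib

noncomputable section

namespace DrinfeldQM

variable {L : Type*} [Field L]

/-- Entry `(i,j)` of `γ ∈ GL₂(F)`, viewed inside `L`. -/
def Mc (F : Subfield L) (γ : GL (Fin 2) F) (i j : Fin 2) : L :=
  ((γ : Matrix (Fin 2) (Fin 2) F) i j : L)

/-- Determinant of `γ ∈ GL₂(F)`, viewed inside `L`. -/
def detL (F : Subfield L) (γ : GL (Fin 2) F) : L :=
  ((γ : Matrix (Fin 2) (Fin 2) F).det : L)

/-- Automorphy factor `cz + d`. -/
def jf (F : Subfield L) (γ : GL (Fin 2) F) (z : L) : L :=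
  Mc F γ 1 0 * z + Mc F γ 1 1

/-- Fractional linear action of `GL₂(F)` on `L` (restricting to `Ω`). -/
def act (F : Subfield L) (γ : GL (Fin 2) F) (z : L) : L :=
  (Mc F γ 0 0 * z + Mc F γ 0 1) / jf F γ z

/-- The Drinfeld upper half plane `Ω = L ∖ F`. -/
def Omega (F : Subfield L) : Set L := {z | z ∉ F}

/-- The slash operator `f |_{k,m} γ` of weight `k` and type `m`. -/
def slash (F : Subfield L) (k m : ℤ) (f : L → L) (γ : GL (Fin 2) F) : L → L :=
  fun z => detL F γ ^ m * jf F γ z ^ (-k) * f (act F γ z)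

/-- `f` is quasi-modular of weight `k`, type `m` and depth `≤ ℓ` for the set `S ⊆ GL₂(F)`
with coefficient family `fam` (only the indices `0,…,ℓ` of `fam` are relevant). -/
def IsQM (F : Subfield L) (S : Set (GL (Fin 2) F)) (k m : ℤ) (ℓ : ℕ)
    (f : L → L) (fam : ℕ → L → L) : Prop :=
  Set.EqOn (fam 0) f (Omega F) ∧
    ∀ γ ∈ S, ∀ z ∈ Omega F,
      slash F k m f γ z =
        ∑ i ∈ Finset.range (ℓ + 1), fam i z * (Mc F γ 1 0 / jf F γ z) ^ i

/-- The coefficient family of the `i`-th coefficient `f_i` of a quasi-modular function with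
coefficient family `fam`:  `(f_i)_h = ((h+i) choose i) · f_{h+i}`. -/
def shiftFam (i : ℕ) (fam : ℕ → L → L) : ℕ → L → L :=
  fun h z => ((h + i).choose i : L) * fam (h + i) z

/-- The double-slash operator `f ∥_{k,m} γ` of a quasi-modular function of depth `≤ ℓ` with
coefficient family `fam`. -/
def dslash (F : Subfield L) (k m : ℤ) (ℓ : ℕ) (fam : ℕ → L → L)
    (γ : GL (Fin 2) F) : L → L :=
  fun z => ∑ i ∈ Finset.range (ℓ + 1),
    (-(Mc F γ 1 0) / jf F γ z) ^ i * detL F γ ^ (m - (i : ℤ)) *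
      jf F γ z ^ (2 * (i : ℤ) - k) * fam i (act F γ z)

/-- The double-slash operator on polynomial-valued functions `P : Ω → L[X]`:
`(P ∥_{k,m} γ)(z, X) = (det γ)^m (cz+d)^{-k} P(γ·z, ((cz+d)²/det γ)(X - c/(cz+d)))`. -/
def pdslash (F : Subfield L) (k m : ℤ) (P : L → Polynomial L)
    (γ : GL (Fin 2) F) : L → Polynomial L :=
  fun z =>
    Polynomial.C (detL F γ ^ m * jf F γ z ^ (-k)) *
      (P (act F γ z)).comp
        (Polynomial.C (jf F γ z ^ 2 / detL F γ) *
          (Polynomial.X - Polynomial.C (Mc F γ 1 0 / jf F γ z)))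

/-- The associated polynomial `P_f(z, X) = ∑_{i=0}^{ℓ} f_i(z) Xⁱ`. -/
def assocPoly (ℓ : ℕ) (fam : ℕ → L → L) : L → Polynomial L :=
  fun z => ∑ i ∈ Finset.range (ℓ + 1), Polynomial.C (fam i z) * Polynomial.X ^ i

/-- `E` satisfies the functional equation of the false Eisenstein series (weight 2, type 1,
depth 1, coefficient family `(E, -π⁻¹)`) for all `γ ∈ S`. -/
def EFunEq (F : Subfield L) (S : Set (GL (Fin 2) F)) (π : L) (E : L → L) : Prop :=
  ∀ γ ∈ S, ∀ z ∈ Omega F,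
    E (act F γ z) =
      (detL F γ)⁻¹ * jf F γ z ^ 2 * (E z - Mc F γ 1 0 / (π * jf F γ z))

variable {Fq : Type*} [Field Fq] [Fintype Fq]

/-- The image in `L` of a polynomial `r ∈ A = Fq[T]` under `A → F ⊆ L`. -/
def iL (F : Subfield L) (ι : Polynomial Fq →+* F) (r : Polynomial Fq) : L := (ι r : L)

/-- `γ ∈ GL₂(F)` lies in `Γ₀(𝔞) ⊆ GL₂(A)`: its entries come from a matrix `M` over
`A = Fq[T]` with unit determinant whose lower-left entry lies in `𝔞`.
Taking `𝔞 = ⊤` expresses membership in `GL₂(A)`. -/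
def InGamma0 (F : Subfield L) (ι : Polynomial Fq →+* F)
    (𝔞 : Ideal (Polynomial Fq)) (γ : GL (Fin 2) F) : Prop :=
  ∃ M : Matrix (Fin 2) (Fin 2) (Polynomial Fq),
    (∀ i j, iL F ι (M i j) = Mc F γ i j) ∧ IsUnit M.det ∧ M 1 0 ∈ 𝔞

/-- `γ ∈ GL₂(F)` lies in the principal congruence subgroup `Γ(𝔫) ⊆ GL₂(A)`. -/
def InGammaN (F : Subfield L) (ι : Polynomial Fq →+* F)
    (𝔫 : Ideal (Polynomial Fq)) (γ : GL (Fin 2) F) : Prop :=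
  ∃ M : Matrix (Fin 2) (Fin 2) (Polynomial Fq),
    (∀ i j, iL F ι (M i j) = Mc F γ i j) ∧ IsUnit M.det ∧
      ∀ i j, M i j - (1 : Matrix (Fin 2) (Fin 2) (Polynomial Fq)) i j ∈ 𝔫

/-- `g` is modular of weight `w` and type `t` for `Γ₀(𝔞)`. -/
def IsModularOn (F : Subfield L) (ι : Polynomial Fq →+* F)
    (𝔞 : Ideal (Polynomial Fq)) (w t : ℤ) (g : L → L) : Prop :=
  ∀ γ : GL (Fin 2) F, InGamma0 F ι 𝔞 γ → ∀ z ∈ Omega F, slash F w t g γ z = g z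

/-- The degeneracy map `(δ_𝔭 g)(z) = g(℘ z)`. -/
def deltaP (F : Subfield L) (ι : Polynomial Fq →+* F) (℘ : Polynomial Fq)
    (g : L → L) : L → L := fun z => g (iL F ι ℘ * z)

/-- The Atkin–Lehner operator `(U_𝔭 g)(z) = ∑_{Q ∈ A, deg Q < deg ℘} g((z+Q)/℘)`,
where `Q = ∑ᵢ cᵢ Tⁱ` ranges over polynomials of degree `< deg ℘`. -/
def UP (F : Subfield L) (ι : Polynomial Fq →+* F) (℘ : Polynomial Fq)
    (g : L → L) : L → L :=
  fun z => ∑ c : Fin ℘.natDegree → Fq,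
    g ((z + iL F ι (∑ i : Fin ℘.natDegree, Polynomial.C (c i) * Polynomial.X ^ (i : ℕ))) /
      iL F ι ℘)

/-- The `𝔭`-stabilization `E_𝔭 = E - ℘·δ_𝔭E`. -/
def Ep (F : Subfield L) (ι : Polynomial Fq →+* F) (℘ : Polynomial Fq)
    (E : L → L) : L → L := fun z => E z - iL F ι ℘ * deltaP F ι ℘ E z

/-!
Conjugation `γ ↦ γ'` by `diag(℘, 1)` maps `Γ₀(𝔪𝔭)` into `Γ₀(𝔪)`, with `℘ (γ · z) = γ' · (℘ z)`
and the same determinant and automorphy factor, so `δ_𝔭` sends modular functions for `Γ₀(𝔪)` to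
modular functions for `Γ₀(𝔪𝔭)` of the same weight and type. For `E` the defects `c / (π (cz + d))`
of `E` and of `℘ δ_𝔭 E` agree, so `E_𝔭` is modular of weight 2 and type 1 for `Γ₀(𝔭)`.
Substituting `δ_𝔭 E = ℘⁻¹ (E - E_𝔭)` into `δ_𝔭 f` and expanding binomially writes `δ_𝔭 f` as a
polynomial in `E` whose coefficients `c_j` are sums of products of powers of `E_𝔭` with the
`δ_𝔭 f_{i,E}`, hence modular of weight `k - 2j` and type `m - j`. Finally any such polynomial in
`E` is quasi-modular: the functional equation of `E` turns `E ∘ γ` into `E - c / (π (cz + d))`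
up to the automorphy factor, and a second binomial expansion gives the coefficient family.
-/

open Finset in
theorem _root_.Finset.sum_range_mul_add_pow {R : Type*} [CommSemiring R] (ℓ : ℕ) (a : ℕ → R)
    (x y : R) :
    ∑ i ∈ range (ℓ + 1), a i * (x + y) ^ i =
      ∑ j ∈ range (ℓ + 1),
        (∑ s ∈ range (ℓ - j + 1), ((s + j).choose j : R) * a (s + j) * x ^ s) * y ^ j := by
  calc ∑ i ∈ range (ℓ + 1), a i * (x + y) ^ i
      = ∑ i ∈ range (ℓ + 1), ∑ j ∈ range (i + 1), a i * (y ^ j * x ^ (i - j) * i.choose j) := by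
        simp_rw [add_comm x y, add_pow, mul_sum]
    _ = ∑ j ∈ range (ℓ + 1), ∑ i ∈ Ico j (ℓ + 1), a i * (y ^ j * x ^ (i - j) * i.choose j) :=
        sum_comm' fun i j => by simp only [mem_range, mem_Ico]; omega
    _ = _ := by
        refine sum_congr rfl fun j hj => ?_
        rw [sum_Ico_eq_sum_range, show ℓ + 1 - j = ℓ - j + 1 by grind, sum_mul]
        refine sum_congr rfl fun s _ => ?_
        rw [add_comm j s, Nat.add_sub_cancel]
        ring

section GL2

variable (F : Subfield L)

theorem detL_ne_zero (γ : GL (Fin 2) F) : detL F γ ≠ 0 := by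
  simpa [detL] using (Matrix.GeneralLinearGroup.det γ).ne_zero

theorem detL_eq (γ : GL (Fin 2) F) :
    detL F γ = Mc F γ 0 0 * Mc F γ 1 1 - Mc F γ 0 1 * Mc F γ 1 0 := by
  simp [detL, Matrix.det_fin_two, Mc]

theorem Mc_mem (γ : GL (Fin 2) F) (i j : Fin 2) : Mc F γ i j ∈ F :=
  SetLike.coe_mem _

theorem mul_mem_Omega {x z : L} (hx : x ∈ F) (hx0 : x ≠ 0) (hz : z ∈ Omega F) :
    x * z ∈ Omega F := fun h => hz (by simpa [hx0] using F.mul_mem (F.inv_mem hx) h)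

theorem jf_ne_zero (γ : GL (Fin 2) F) {z : L} (hz : z ∈ Omega F) : jf F γ z ≠ 0 := by
  intro h
  rcases eq_or_ne (Mc F γ 1 0) 0 with hc | hc
  · have hd : Mc F γ 1 1 = 0 := by simpa [jf, hc] using h
    exact detL_ne_zero F γ (by simp [detL_eq, hc, hd])
  · refine hz ?_
    rw [jf] at h
    have : z = -Mc F γ 1 1 / Mc F γ 1 0 := by
      field_simp
      linear_combination h
    rw [this]
    exact F.div_mem (F.neg_mem (Mc_mem F γ 1 1)) (Mc_mem F γ 1 0)

variable {F} {γ : GL (Fin 2) F} {z : L}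

theorem slash_mul {w₁ w₂ t₁ t₂ : ℤ} (g h : L → L) (hz : z ∈ Omega F) :
    slash F (w₁ + w₂) (t₁ + t₂) (fun z => g z * h z) γ z =
      slash F w₁ t₁ g γ z * slash F w₂ t₂ h γ z := by
  simp only [slash, zpow_add₀ (detL_ne_zero F γ), neg_add, zpow_add₀ (jf_ne_zero F γ hz)]
  ring

theorem slash_pow {w t : ℤ} (g : L → L) (n : ℕ) :
    slash F (n * w) (n * t) (fun z => g z ^ n) γ z = slash F w t g γ z ^ n := by
  rw [slash, slash, mul_pow, mul_pow, ← mul_neg, zpow_mul', zpow_mul', zpow_natCast,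
    zpow_natCast]

theorem slash_const_mul {w t : ℤ} (a : L) (g : L → L) :
    slash F w t (fun z => a * g z) γ z = a * slash F w t g γ z := by
  simp only [slash]
  ring

theorem slash_neg {w t : ℤ} (g : L → L) :
    slash F w t (fun z => -g z) γ z = -slash F w t g γ z := by
  simp only [slash]
  ring

theorem slash_sum {κ : Type*} {w t : ℤ} (s : Finset κ) (g : κ → L → L) :
    slash F w t (fun z => ∑ i ∈ s, g i z) γ z = ∑ i ∈ s, slash F w t (g i) γ z := by
  simp only [slash, Finset.mul_sum]

theorem EFunEq.slash_eq {S : Set (GL (Fin 2) F)} {π : L} {E : L → L} (hE : EFunEq F S π E)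
    (hγ : γ ∈ S) (hz : z ∈ Omega F) :
    slash F 2 1 E γ z = E z - π⁻¹ * (Mc F γ 1 0 / jf F γ z) := by
  have hj := jf_ne_zero F γ hz
  rw [slash, hE γ hγ z hz, zpow_one, zpow_neg, zpow_two]
  field_simp [detL_ne_zero F γ]

end GL2

section Fq

variable {F : Subfield L} {Fq : Type*} [Field Fq] {ι : Polynomial Fq →+* F}

theorem InGamma0.mono {𝔞 𝔟 : Ideal (Polynomial Fq)} {γ : GL (Fin 2) F}
    (hγ : InGamma0 F ι 𝔞 γ) (h : 𝔞 ≤ 𝔟) : InGamma0 F ι 𝔟 γ :=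
  let ⟨M, hM, hdet, hM10⟩ := hγ
  ⟨M, hM, hdet, h hM10⟩

/- `γ'` is `diag(℘, 1) γ diag(℘, 1)⁻¹`. -/
theorem InGamma0.exists_conj {𝔪 : Ideal (Polynomial Fq)} {℘ : Polynomial Fq}
    {γ : GL (Fin 2) F} (hγ : InGamma0 F ι (𝔪 * Ideal.span {℘}) γ) :
    ∃ γ' : GL (Fin 2) F, InGamma0 F ι 𝔪 γ' ∧ detL F γ' = detL F γ ∧
      iL F ι ℘ * Mc F γ' 1 0 = Mc F γ 1 0 ∧
      ∀ z, jf F γ' (iL F ι ℘ * z) = jf F γ z ∧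
        act F γ' (iL F ι ℘ * z) = iL F ι ℘ * act F γ z := by
  obtain ⟨M, hM, hdet, hc⟩ := hγ
  obtain ⟨c, hc𝔪, hcM⟩ := Ideal.mem_mul_span_singleton.mp hc
  set M' : Matrix (Fin 2) (Fin 2) (Polynomial Fq) := !![M 0 0, ℘ * M 0 1; c, M 1 1]
  have hdet' : M'.det = M.det := by
    rw [Matrix.det_fin_two_of, Matrix.det_fin_two, ← hcM]; ring
  set γ' := Matrix.GeneralLinearGroup.map ι (M'.nonsingInvUnit (hdet' ▸ hdet))
  have hγ' : ∀ i j, Mc F γ' i j = iL F ι (M' i j) := fun _ _ => rfl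
  refine ⟨γ', ⟨M', fun i j => (hγ' i j).symm, hdet' ▸ hdet, by simpa [M'] using hc𝔪⟩,
    ?_, ?_, fun z => ⟨?_, ?_⟩⟩ <;>
  simp [← hM, jf, act, detL_eq, hγ', M', iL, ← hcM] <;> ring

namespace IsModularOn

variable {𝔞 𝔟 : Ideal (Polynomial Fq)} {w w₁ w₂ t t₁ t₂ : ℤ} {g h : L → L}

theorem mono (hg : IsModularOn F ι 𝔟 w t g) (h : 𝔞 ≤ 𝔟) : IsModularOn F ι 𝔞 w t g :=
  fun γ hγ => hg γ (hγ.mono h)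

theorem mul (hg : IsModularOn F ι 𝔞 w₁ t₁ g) (hh : IsModularOn F ι 𝔞 w₂ t₂ h) :
    IsModularOn F ι 𝔞 (w₁ + w₂) (t₁ + t₂) (fun z => g z * h z) := fun γ hγ z hz => by
  rw [slash_mul g h hz, hg γ hγ z hz, hh γ hγ z hz]

theorem pow (hg : IsModularOn F ι 𝔞 w t g) (n : ℕ) :
    IsModularOn F ι 𝔞 (n * w) (n * t) (fun z => g z ^ n) := fun γ hγ z hz => by
  rw [slash_pow, hg γ hγ z hz]

theorem neg (hg : IsModularOn F ι 𝔞 w t g) : IsModularOn F ι 𝔞 w t (fun z => -g z) :=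
  fun γ hγ z hz => by rw [slash_neg, hg γ hγ z hz]

theorem const_mul (hg : IsModularOn F ι 𝔞 w t g) (a : L) :
    IsModularOn F ι 𝔞 w t (fun z => a * g z) :=
  fun γ hγ z hz => by rw [slash_const_mul, hg γ hγ z hz]

theorem sum {κ : Type*} {s : Finset κ} {g : κ → L → L}
    (hg : ∀ i ∈ s, IsModularOn F ι 𝔞 w t (g i)) :
    IsModularOn F ι 𝔞 w t (fun z => ∑ i ∈ s, g i z) := fun γ hγ z hz => by
  rw [slash_sum]
  exact Finset.sum_congr rfl fun i hi => hg i hi γ hγ z hz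

end IsModularOn

variable {℘ : Polynomial Fq} {E : L → L}

theorem iL_mem (r : Polynomial Fq) : iL F ι r ∈ F :=
  SetLike.coe_mem _

theorem iL_ne_zero (hι : Function.Injective ι) {r : Polynomial Fq} (hr : r ≠ 0) :
    iL F ι r ≠ 0 := by
  simpa [iL] using (map_ne_zero_iff ι hι).mpr hr

theorem isModularOn_deltaP (hι : Function.Injective ι) (h℘ : ℘ ≠ 0)
    {𝔪 : Ideal (Polynomial Fq)} {w t : ℤ} {g : L → L} (hg : IsModularOn F ι 𝔪 w t g) :
    IsModularOn F ι (𝔪 * Ideal.span {℘}) w t (deltaP F ι ℘ g) := by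
  intro γ hγ z hz
  obtain ⟨γ', hγ', hdet, -, hconj⟩ := hγ.exists_conj
  obtain ⟨hj, hact⟩ := hconj z
  calc slash F w t (deltaP F ι ℘ g) γ z = slash F w t g γ' (iL F ι ℘ * z) := by
        simp only [slash, deltaP, hdet, hj, hact]
    _ = g (iL F ι ℘ * z) := hg γ' hγ' _ (mul_mem_Omega F (iL_mem ℘) (iL_ne_zero hι h℘) hz)

theorem isModularOn_Ep (hι : Function.Injective ι) (h℘ : ℘ ≠ 0) {π : L}
    (hE : EFunEq F {γ | InGamma0 F ι ⊤ γ} π E) :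
    IsModularOn F ι (Ideal.span {℘}) 2 1 (Ep F ι ℘ E) := by
  intro γ hγ z hz
  obtain ⟨γ', hγ', hdet, hc, hconj⟩ :=
    InGamma0.exists_conj (𝔪 := ⊤) (by rwa [Ideal.top_mul])
  obtain ⟨hj, hact⟩ := hconj z
  have hE₁ := hE.slash_eq (hγ.mono le_top) hz
  have hE₂ := hE.slash_eq hγ' (mul_mem_Omega F (iL_mem ℘) (iL_ne_zero hι h℘) hz)
  calc slash F 2 1 (Ep F ι ℘ E) γ z
      = slash F 2 1 E γ z - iL F ι ℘ * slash F 2 1 E γ' (iL F ι ℘ * z) := by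
        simp only [slash, Ep, deltaP, hdet, hj, hact]
        ring
    _ = Ep F ι ℘ E z := by
        rw [hE₁, hE₂, hj, ← hc]
        simp only [Ep, deltaP]
        ring

theorem deltaP_eq_inv_mul (hP : iL F ι ℘ ≠ 0) (z : L) :
    deltaP F ι ℘ E z = (iL F ι ℘)⁻¹ * (-Ep F ι ℘ E z + E z) := by
  simp only [Ep]
  field_simp
  ring

variable (F ι ℘ E) in
def degeneracyCoeff (ℓ : ℕ) (fE : ℕ → L → L) (j : ℕ) : L → L := fun z =>
  ∑ s ∈ Finset.range (ℓ - j + 1),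
    ((s + j).choose j : L) * iL F ι ℘ ^ (-((s : ℤ) + (j : ℤ))) *
      (-(Ep F ι ℘ E z)) ^ s * deltaP F ι ℘ (fE (s + j)) z

theorem deltaP_sum_mul_pow (hι : Function.Injective ι) (h℘ : ℘ ≠ 0) (ℓ : ℕ)
    (fE : ℕ → L → L) (z : L) :
    deltaP F ι ℘ (fun z => ∑ i ∈ Finset.range (ℓ + 1), fE i z * E z ^ i) z =
      ∑ j ∈ Finset.range (ℓ + 1), degeneracyCoeff F ι ℘ E ℓ fE j z * E z ^ j := by
  have hP := iL_ne_zero hι h℘ (F := F)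
  calc deltaP F ι ℘ (fun z => ∑ i ∈ Finset.range (ℓ + 1), fE i z * E z ^ i) z
      = ∑ i ∈ Finset.range (ℓ + 1), deltaP F ι ℘ (fE i) z * deltaP F ι ℘ E z ^ i := rfl
    _ = ∑ i ∈ Finset.range (ℓ + 1),
          (iL F ι ℘ ^ (-(i : ℤ)) * deltaP F ι ℘ (fE i) z) * (-Ep F ι ℘ E z + E z) ^ i := by
        refine Finset.sum_congr rfl fun i _ => ?_
        rw [deltaP_eq_inv_mul (E := E) hP, mul_pow, zpow_neg, zpow_natCast, inv_pow]
        ring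
    _ = _ := by
        rw [Finset.sum_range_mul_add_pow]
        refine Finset.sum_congr rfl fun j _ => ?_
        simp only [degeneracyCoeff]
        congr 1
        refine Finset.sum_congr rfl fun s _ => ?_
        push_cast
        ring

theorem isModularOn_degeneracyCoeff (hι : Function.Injective ι) (h℘ : ℘ ≠ 0) {π : L}
    (hE : EFunEq F {γ | InGamma0 F ι ⊤ γ} π E) {𝔪 : Ideal (Polynomial Fq)} {k m : ℤ} {ℓ : ℕ}
    {fE : ℕ → L → L}
    (hmod : ∀ i ≤ ℓ, IsModularOn F ι 𝔪 (k - 2 * (i : ℤ)) (m - (i : ℤ)) (fE i))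
    {j : ℕ} (hj : j ≤ ℓ) :
    IsModularOn F ι (𝔪 * Ideal.span {℘}) (k - 2 * (j : ℤ)) (m - (j : ℤ))
      (degeneracyCoeff F ι ℘ E ℓ fE j) := by
  refine IsModularOn.sum fun s hs => ?_
  have hsj : s + j ≤ ℓ := by grind
  have hEp : IsModularOn F ι (𝔪 * Ideal.span {℘}) 2 1 (Ep F ι ℘ E) :=
    (isModularOn_Ep hι h℘ hE).mono Ideal.mul_le_right
  have hterm := ((hEp.neg.pow s).const_mul
    (((s + j).choose j : L) * iL F ι ℘ ^ (-((s : ℤ) + (j : ℤ))))).mul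
    (isModularOn_deltaP hι h℘ (hmod _ hsj))
  convert hterm using 1 <;> push_cast <;> ring

theorem degeneracyCoeff_self (ℓ : ℕ) (fE : ℕ → L → L) (z : L) :
    degeneracyCoeff F ι ℘ E ℓ fE ℓ z = iL F ι ℘ ^ (-(ℓ : ℤ)) * deltaP F ι ℘ (fE ℓ) z := by
  simp [degeneracyCoeff]

theorem isQM_sum_mul_pow {𝔞 : Ideal (Polynomial Fq)} {π : L}
    (hE : EFunEq F {γ | InGamma0 F ι 𝔞 γ} π E) {k m : ℤ} {ℓ : ℕ} {c : ℕ → L → L}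
    (hc : ∀ j ≤ ℓ, IsModularOn F ι 𝔞 (k - 2 * (j : ℤ)) (m - (j : ℤ)) (c j)) :
    IsQM F {γ | InGamma0 F ι 𝔞 γ} k m ℓ
      (fun z => ∑ j ∈ Finset.range (ℓ + 1), c j z * E z ^ j)
      (fun i z => (-π⁻¹) ^ i *
        ∑ s ∈ Finset.range (ℓ - i + 1), ((s + i).choose i : L) * c (s + i) z * E z ^ s) := by
  refine ⟨fun z _ => by simp, fun γ hγ z hz => ?_⟩
  have hterm : ∀ j ≤ ℓ, slash F k m (fun z => c j z * E z ^ j) γ z =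
      c j z * (E z + -π⁻¹ * (Mc F γ 1 0 / jf F γ z)) ^ j := by
    intro j hj
    have h := slash_mul (γ := γ) (w₁ := k - 2 * j) (w₂ := j * 2) (t₁ := m - j) (t₂ := j * 1)
      (c j) (fun z => E z ^ j) hz
    rw [show k - 2 * (j : ℤ) + j * 2 = k by ring, show m - (j : ℤ) + j * 1 = m by ring] at h
    rw [h, hc j hj γ hγ z hz, slash_pow, hE.slash_eq hγ hz]
    ring
  calc slash F k m (fun z => ∑ j ∈ Finset.range (ℓ + 1), c j z * E z ^ j) γ z
      = ∑ j ∈ Finset.range (ℓ + 1), c j z * (E z + -π⁻¹ * (Mc F γ 1 0 / jf F γ z)) ^ j := by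
        rw [slash_sum]
        exact Finset.sum_congr rfl fun j hj => hterm j (by grind)
    _ = _ := by
        rw [Finset.sum_range_mul_add_pow]
        refine Finset.sum_congr rfl fun i _ => ?_
        rw [mul_pow]
        ring

end Fq

theorem degeneracy_map_quasi_modular_general
    {L : Type*} [Field L] {Fq : Type*} [Field Fq]
    (F : Subfield L) (ι : Polynomial Fq →+* F) (hι : Function.Injective ι)
    (℘ : Polynomial Fq) (hmon : ℘.Monic)
    (𝔪 : Ideal (Polynomial Fq))
    (π : L) (E : L → L)
    (hE : EFunEq F {γ : GL (Fin 2) F | InGamma0 F ι ⊤ γ} π E)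
    (k m : ℤ) (ℓ : ℕ) (fE : ℕ → L → L)
    (hmod : ∀ i ≤ ℓ, IsModularOn F ι 𝔪 (k - 2 * (i : ℤ)) (m - (i : ℤ)) (fE i))
    (f : L → L)
    (hf : ∀ z, f z = ∑ i ∈ Finset.range (ℓ + 1), fE i z * E z ^ i)
    (c : ℕ → L → L)
    (hc : ∀ j z, c j z = ∑ s ∈ Finset.range (ℓ - j + 1),
      ((s + j).choose j : L) * iL F ι ℘ ^ (-((s : ℤ) + (j : ℤ))) *
        (-(Ep F ι ℘ E z)) ^ s * deltaP F ι ℘ (fE (s + j)) z) :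
    (∀ z ∈ Omega F,
        deltaP F ι ℘ f z = ∑ j ∈ Finset.range (ℓ + 1), c j z * E z ^ j) ∧
      (∀ j ≤ ℓ, IsModularOn F ι (𝔪 * Ideal.span {℘})
        (k - 2 * (j : ℤ)) (m - (j : ℤ)) (c j)) ∧
      (∃ fam : ℕ → L → L,
        IsQM F {γ : GL (Fin 2) F | InGamma0 F ι (𝔪 * Ideal.span {℘}) γ} k m ℓ
          (deltaP F ι ℘ f) fam) ∧
      (∀ z, c ℓ z = iL F ι ℘ ^ (-(ℓ : ℤ)) * deltaP F ι ℘ (fE ℓ) z) ∧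
      ((∃ z ∈ Omega F, fE ℓ z ≠ 0) → ∃ z ∈ Omega F, c ℓ z ≠ 0) := by
  obtain rfl : f = fun z => ∑ i ∈ Finset.range (ℓ + 1), fE i z * E z ^ i := funext hf
  obtain rfl : c = degeneracyCoeff F ι ℘ E ℓ fE := funext fun j => funext (hc j)
  have h℘ := hmon.ne_zero
  have hP := iL_ne_zero (F := F) hι h℘
  have hexp := deltaP_sum_mul_pow (E := E) hι h℘ ℓ fE
  have hcmod := fun j (hj : j ≤ ℓ) => isModularOn_degeneracyCoeff hι h℘ hE hmod hj
  have hQM := isQM_sum_mul_pow (fun γ hγ => hE γ (InGamma0.mono hγ le_top)) hcmod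
  refine ⟨fun z _ => hexp z, hcmod, ⟨_, funext hexp ▸ hQM⟩, degeneracyCoeff_self ℓ fE, ?_⟩
  rintro ⟨z, hz, hfz⟩
  refine ⟨(iL F ι ℘)⁻¹ * z, mul_mem_Omega F (F.inv_mem (iL_mem ℘)) (inv_ne_zero hP) hz, ?_⟩
  rw [degeneracyCoeff_self, deltaP, mul_inv_cancel_left₀ hP]
  exact mul_ne_zero (zpow_ne_zero _ hP) hfz

/-- Degeneracy map on quasi-modular functions (Proposition 5.7). -/
theorem degeneracy_map_quasi_modular
    {L : Type*} [Field L] {Fq : Type*} [Field Fq] [Fintype Fq]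
    (F : Subfield L) (ι : Polynomial Fq →+* F) (hι : Function.Injective ι)
    (℘ : Polynomial Fq) (hmon : ℘.Monic) (hirr : Irreducible ℘)
    (𝔪 : Ideal (Polynomial Fq)) (h𝔪 : ¬ 𝔪 ≤ Ideal.span {℘})
    (π : L) (hπ : π ≠ 0) (E : L → L)
    (hE : EFunEq F {γ : GL (Fin 2) F | InGamma0 F ι ⊤ γ} π E)
    (k m : ℤ) (ℓ : ℕ) (fE : ℕ → L → L)
    (hmod : ∀ i ≤ ℓ, IsModularOn F ι 𝔪 (k - 2 * (i : ℤ)) (m - (i : ℤ)) (fE i))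
    (f : L → L)
    (hf : ∀ z, f z = ∑ i ∈ Finset.range (ℓ + 1), fE i z * E z ^ i)
    (c : ℕ → L → L)
    (hc : ∀ j z, c j z = ∑ s ∈ Finset.range (ℓ - j + 1),
      ((s + j).choose j : L) * iL F ι ℘ ^ (-((s : ℤ) + (j : ℤ))) *
        (-(Ep F ι ℘ E z)) ^ s * deltaP F ι ℘ (fE (s + j)) z) :
    (∀ z ∈ Omega F,
        deltaP F ι ℘ f z = ∑ j ∈ Finset.range (ℓ + 1), c j z * E z ^ j) ∧
      (∀ j ≤ ℓ, IsModularOn F ι (𝔪 * Ideal.span {℘})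
        (k - 2 * (j : ℤ)) (m - (j : ℤ)) (c j)) ∧
      (∃ fam : ℕ → L → L,
        IsQM F {γ : GL (Fin 2) F | InGamma0 F ι (𝔪 * Ideal.span {℘}) γ} k m ℓ
          (deltaP F ι ℘ f) fam) ∧
      (∀ z, c ℓ z = iL F ι ℘ ^ (-(ℓ : ℤ)) * deltaP F ι ℘ (fE ℓ) z) ∧
      ((∃ z ∈ Omega F, fE ℓ z ≠ 0) → ∃ z ∈ Omega F, c ℓ z ≠ 0) :=
  degeneracy_map_quasi_modular_general F ι hι ℘ hmon 𝔪 π E hE k m ℓ fE hmod f hf c hc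

end DrinfeldQM
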